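/- Let Σ_x and Σ_z be positive definite p×p matrices and Γ₁ an invertible p×p matrix. For p×p matrices L₁, L₂ with M := L₁Γ₁ᵀ + L₂ invertible, define g(L₁,L₂) = M⁻¹(L₂Σ_zL₂ᵀ + L₁Σ_xL₁ᵀ)(M⁻¹)ᵀ. Then for every α ∈ ℝᵖ, αᵀg(L₁,L₂)α ≥ αᵀ(Γ₁Σ_x⁻¹Γ₁ᵀ + Σ_z⁻¹)⁻¹α, with equality when L₁ = Γ₁Σ_x⁻¹ and L₂ = Σ_z⁻¹. -/

import Mathlib

/-!
With `A = Γ₁ Σ_x⁻¹ Γ₁ᵀ + Σ_z⁻¹`, `M = L₁ Γ₁ᵀ + L₂` and `K = M A⁻¹`, completing the square gives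
`L₂ Σ_z L₂ᵀ + L₁ Σ_x L₁ᵀ = M A⁻¹ Mᵀ + D₁ Σ_x D₁ᵀ + D₂ Σ_z D₂ᵀ` with `D₁ = L₁ - K Γ₁ Σ_x⁻¹` and
`D₂ = L₂ - K Σ_z⁻¹`. Hence `g(L₁, L₂) - A⁻¹ = M⁻¹ (D₁ Σ_x D₁ᵀ + D₂ Σ_z D₂ᵀ) M⁻ᵀ` is positive
semidefinite. At `L₁ = Γ₁ Σ_x⁻¹`, `L₂ = Σ_z⁻¹` both `M` and the middle factor of `g` equal `A`.
-/

open Matrix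

/-- The quadratic form of the error variance in the class of linear models
indexed by the operators L₁, L₂.  (`Sx`, `Sz` stand for Σ_x, Σ_z.) -/
noncomputable def errVar {p : ℕ} (Sx Sz Γ₁ L₁ L₂ : Matrix (Fin p) (Fin p) ℝ) :
    Matrix (Fin p) (Fin p) ℝ :=
  (L₁ * Γ₁ᵀ + L₂)⁻¹ * (L₂ * Sz * L₂ᵀ + L₁ * Sx * L₁ᵀ) * ((L₁ * Γ₁ᵀ + L₂)⁻¹)ᵀ

namespace Matrix

theorem PosDef.isSymm {n : Type*} {S : Matrix n n ℝ} (hS : S.PosDef) : S.IsSymm :=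
  isHermitian_iff_isSymm.mp hS.isHermitian

variable {n : Type*} [Fintype n]

theorem PosSemidef.mul_mul_transpose_same {S : Matrix n n ℝ} (hS : S.PosSemidef)
    (B : Matrix n n ℝ) : (B * S * Bᵀ).PosSemidef := by
  simpa only [conjTranspose_eq_transpose_of_trivial] using hS.mul_mul_conjTranspose_same B

theorem dotProduct_mulVec_le_of_posSemidef_sub {A B : Matrix n n ℝ} (h : (B - A).PosSemidef)
    (x : n → ℝ) : x ⬝ᵥ A *ᵥ x ≤ x ⬝ᵥ B *ᵥ x := by
  have := h.dotProduct_mulVec_nonneg x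
  rwa [star_trivial, sub_mulVec, dotProduct_sub, sub_nonneg] at this

variable [DecidableEq n]

theorem PosDef.mul_inv_mul_transpose_add_inv {S₁ S₂ : Matrix n n ℝ} (hS₁ : S₁.PosDef)
    (hS₂ : S₂.PosDef) (Γ : Matrix n n ℝ) : (Γ * S₁⁻¹ * Γᵀ + S₂⁻¹).PosDef :=
  PosDef.posSemidef_add (hS₁.inv.posSemidef.mul_mul_transpose_same Γ) hS₂.inv

section CommRing

variable {R : Type*} [CommRing R]

theorem sub_mul_inv_mul_mul_sub_mul_inv_transpose {S : Matrix n n R} (hS : S.IsSymm)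
    (hSu : IsUnit S.det) (L B : Matrix n n R) :
    (L - B * S⁻¹) * S * (L - B * S⁻¹)ᵀ = L * S * Lᵀ - L * Bᵀ - B * Lᵀ + B * S⁻¹ * Bᵀ := by
  simp only [transpose_sub, transpose_mul, hS.inv.eq, sub_mul, mul_sub, mul_assoc,
    nonsing_inv_mul_cancel_left _ _ hSu, mul_nonsing_inv_cancel_left _ _ hSu]
  abel

theorem mul_mul_transpose_add_mul_mul_transpose_eq {S₁ S₂ : Matrix n n R} (hS₁ : S₁.IsSymm)
    (hS₂ : S₂.IsSymm) (hS₁u : IsUnit S₁.det) (hS₂u : IsUnit S₂.det) {Γ L₁ L₂ A M : Matrix n n R}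
    (hA : A = Γ * S₁⁻¹ * Γᵀ + S₂⁻¹) (hAu : IsUnit A.det) (hM : M = L₁ * Γᵀ + L₂) :
    L₂ * S₂ * L₂ᵀ + L₁ * S₁ * L₁ᵀ =
      M * A⁻¹ * Mᵀ + (L₁ - M * A⁻¹ * Γ * S₁⁻¹) * S₁ * (L₁ - M * A⁻¹ * Γ * S₁⁻¹)ᵀ
        + (L₂ - M * A⁻¹ * S₂⁻¹) * S₂ * (L₂ - M * A⁻¹ * S₂⁻¹)ᵀ := by
  have hAi : A⁻¹ᵀ = A⁻¹ := by
    refine IsSymm.eq (IsSymm.inv ?_)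
    simp only [hA, IsSymm, transpose_add, transpose_mul, transpose_transpose, hS₁.inv.eq,
      hS₂.inv.eq, mul_assoc]
  have hleft : L₁ * (M * A⁻¹ * Γ)ᵀ + L₂ * (M * A⁻¹)ᵀ = M * A⁻¹ * Mᵀ := by
    calc _ = (L₁ * Γᵀ + L₂) * A⁻¹ * Mᵀ := by simp only [transpose_mul, hAi, add_mul, mul_assoc]
      _ = M * A⁻¹ * Mᵀ := by rw [← hM]
  have hright : M * A⁻¹ * Γ * L₁ᵀ + M * A⁻¹ * L₂ᵀ = M * A⁻¹ * Mᵀ := by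
    simp only [hM, transpose_add, transpose_mul, transpose_transpose, mul_add, mul_assoc]
  have hquad : M * A⁻¹ * Γ * S₁⁻¹ * (M * A⁻¹ * Γ)ᵀ + M * A⁻¹ * S₂⁻¹ * (M * A⁻¹)ᵀ
      = M * A⁻¹ * Mᵀ := by
    calc _ = M * A⁻¹ * (Γ * S₁⁻¹ * Γᵀ + S₂⁻¹) * A⁻¹ * Mᵀ := by
          simp only [transpose_mul, hAi, add_mul, mul_add, mul_assoc]
      _ = M * A⁻¹ * Mᵀ := by rw [← hA, nonsing_inv_mul_cancel_right _ _ hAu]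
  rw [sub_mul_inv_mul_mul_sub_mul_inv_transpose hS₁ hS₁u,
    sub_mul_inv_mul_mul_sub_mul_inv_transpose hS₂ hS₂u]
  linear_combination (norm := abel) hleft + hright - hquad

end CommRing

end Matrix

section ErrorVariance

variable {p : ℕ} {Sx Sz : Matrix (Fin p) (Fin p) ℝ}

theorem posSemidef_errVar_sub (hSx : Sx.PosDef) (hSz : Sz.PosDef)
    {Γ₁ L₁ L₂ : Matrix (Fin p) (Fin p) ℝ} (hM : IsUnit (L₁ * Γ₁ᵀ + L₂).det) :
    (errVar Sx Sz Γ₁ L₁ L₂ - (Γ₁ * Sx⁻¹ * Γ₁ᵀ + Sz⁻¹)⁻¹).PosSemidef := by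
  set A := Γ₁ * Sx⁻¹ * Γ₁ᵀ + Sz⁻¹ with hA
  set M := L₁ * Γ₁ᵀ + L₂ with hMdef
  set K := M * A⁻¹
  have hAu : IsUnit A.det := (hSx.mul_inv_mul_transpose_add_inv hSz Γ₁).det_pos.ne'.isUnit
  set E := (L₁ - K * Γ₁ * Sx⁻¹) * Sx * (L₁ - K * Γ₁ * Sx⁻¹)ᵀ
    + (L₂ - K * Sz⁻¹) * Sz * (L₂ - K * Sz⁻¹)ᵀ
  have hE : E.PosSemidef := (hSx.posSemidef.mul_mul_transpose_same _).add
    (hSz.posSemidef.mul_mul_transpose_same _)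
  have hdecomp : errVar Sx Sz Γ₁ L₁ L₂ = A⁻¹ + M⁻¹ * E * M⁻¹ᵀ := by
    rw [errVar, mul_mul_transpose_add_mul_mul_transpose_eq hSx.isSymm hSz.isSymm
      hSx.det_pos.ne'.isUnit hSz.det_pos.ne'.isUnit hA hAu hMdef, add_assoc, mul_add, add_mul]
    congr 1
    simp only [mul_assoc]
    rw [← transpose_mul, nonsing_inv_mul _ hM, transpose_one, mul_one,
      nonsing_inv_mul_cancel_left _ _ hM]
  rw [hdecomp, add_sub_cancel_left]
  exact hE.mul_mul_transpose_same _

theorem errVar_optimal (hSx : Sx.PosDef) (hSz : Sz.PosDef) (Γ₁ : Matrix (Fin p) (Fin p) ℝ) :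
    errVar Sx Sz Γ₁ (Γ₁ * Sx⁻¹) Sz⁻¹ = (Γ₁ * Sx⁻¹ * Γ₁ᵀ + Sz⁻¹)⁻¹ := by
  have hA := hSx.mul_inv_mul_transpose_add_inv hSz Γ₁
  rw [errVar, transpose_mul, hSx.isSymm.inv.eq, hSz.isSymm.inv.eq,
    nonsing_inv_mul _ hSz.det_pos.ne'.isUnit, one_mul,
    nonsing_inv_mul_cancel_right _ _ hSx.det_pos.ne'.isUnit, ← mul_assoc, add_comm Sz⁻¹,
    hA.isSymm.inv.eq, nonsing_inv_mul _ hA.det_pos.ne'.isUnit, one_mul]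

end ErrorVariance

theorem stmt_5_general {p : ℕ}
    (Sx Sz Γ₁ : Matrix (Fin p) (Fin p) ℝ)
    (hSx : Sx.PosDef) (hSz : Sz.PosDef) :
    (∀ L₁ L₂ : Matrix (Fin p) (Fin p) ℝ, IsUnit (L₁ * Γ₁ᵀ + L₂).det →
      ∀ α : Fin p → ℝ,
        α ⬝ᵥ ((Γ₁ * Sx⁻¹ * Γ₁ᵀ + Sz⁻¹)⁻¹).mulVec α ≤
          α ⬝ᵥ (errVar Sx Sz Γ₁ L₁ L₂).mulVec α) ∧
    errVar Sx Sz Γ₁ (Γ₁ * Sx⁻¹) Sz⁻¹ = (Γ₁ * Sx⁻¹ * Γ₁ᵀ + Sz⁻¹)⁻¹ :=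
  ⟨fun _ _ hM α => dotProduct_mulVec_le_of_posSemidef_sub (posSemidef_errVar_sub hSx hSz hM) α,
    errVar_optimal hSx hSz Γ₁⟩

/-- the error variance quadratic form is minimized (over all admissible
L₁, L₂) at L₁ = Γ₁Σ_x⁻¹, L₂ = Σ_z⁻¹, with minimum value (Γ₁Σ_x⁻¹Γ₁ᵀ + Σ_z⁻¹)⁻¹. -/
theorem stmt_5 {p : ℕ}
    (Sx Sz Γ₁ : Matrix (Fin p) (Fin p) ℝ)
    (hSx : Sx.PosDef) (hSz : Sz.PosDef) (hΓ₁ : IsUnit Γ₁.det) :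
    (∀ L₁ L₂ : Matrix (Fin p) (Fin p) ℝ, IsUnit (L₁ * Γ₁ᵀ + L₂).det →
      ∀ α : Fin p → ℝ,
        α ⬝ᵥ ((Γ₁ * Sx⁻¹ * Γ₁ᵀ + Sz⁻¹)⁻¹).mulVec α ≤
          α ⬝ᵥ (errVar Sx Sz Γ₁ L₁ L₂).mulVec α) ∧
    errVar Sx Sz Γ₁ (Γ₁ * Sx⁻¹) Sz⁻¹ = (Γ₁ * Sx⁻¹ * Γ₁ᵀ + Sz⁻¹)⁻¹ :=
  stmt_5_general Sx Sz Γ₁ hSx hSz
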